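/- arXiv:1502.05984 — 2 statements merged into one kernel-verified Lean document; each statement's English description precedes it below -/
import Mathlib

section
/- For any two measurable sets A, B ⊆ T², the measure of the intersection A ∩ B(n) converges to |A|·|B|/(4π²) as n → ∞. -/
/-!
`T2` is a copy of the standard torus `(ℝ/ℤ)²` with its Haar probability measure scaled by `4π²`,
and `dil n` becomes `x ↦ n • x`. On `L²` of the standard torus `(ℝ/ℤ)^d` composition with
`x ↦ n • x` is an isometry sending the character `e_k` to `e_{n k}`, so `⟪e_a, e_{n b}⟫` is
eventually `⟪e_a, 1⟫ ⟪1, e_b⟫`. The characters span a dense subspace and the operators are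
uniformly bounded, so `⟪f, g ∘ (n • ·)⟫ → ⟪f, 1⟫ ⟪1, g⟫` for all `f, g ∈ L²`; for indicators
of `A` and `B` this is the claim.
-/

open MeasureTheory Real Filter

noncomputable section

instance : Fact (0 < 2 * π) := ⟨by positivity⟩

/-- The two-dimensional torus `(ℝ/2πℤ)²`. -/
abbrev T2 := AddCircle (2 * π) × AddCircle (2 * π)

/-- The dilation map `(x,y) ↦ (nx, ny)` on the torus. -/
def dil (n : ℕ) (p : T2) : T2 := (n • p.1, n • p.2)

open Topology Submodule
open scoped InnerProductSpace

section DenseSpan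

variable {𝕜 E F ι : Type*} [RCLike 𝕜] {l : Filter ι}

theorem ContinuousLinearMap.tendsto_apply_of_dense_span {σ : 𝕜 →+* 𝕜} [RingHomIsometric σ]
    [NormedAddCommGroup E] [NormedSpace 𝕜 E] [NormedAddCommGroup F] [NormedSpace 𝕜 F]
    {T : ι → E →SL[σ] F} {T₀ : E →SL[σ] F} {C : ℝ} (hT : ∀ i x, ‖T i x‖ ≤ C * ‖x‖)
    {s : Set E} (hs : Dense (span 𝕜 s : Set E))
    (h : ∀ x ∈ s, Tendsto (fun i ↦ T i x) l (𝓝 (T₀ x))) (x : E) :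
    Tendsto (fun i ↦ T i x) l (𝓝 (T₀ x)) := by
  have hequi : Equicontinuous ((↑) ∘ T : ι → E → F) :=
    ((NormedSpace.equicontinuous_TFAE T).out 3 1).mp (by exact ⟨C, hT⟩)
  have hclosed : IsClosed {x | Tendsto (fun i ↦ T i x) l (𝓝 (T₀ x))} :=
    hequi.isClosed_setOfPred_tendsto T₀.continuous
  have hspan : (span 𝕜 s : Set E) ⊆ {x | Tendsto (fun i ↦ T i x) l (𝓝 (T₀ x))} := by
    intro x hx
    induction hx using span_induction with
    | mem x hx => exact h x hx
    | zero => simpa using tendsto_const_nhds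
    | add x y _ _ hx hy => simpa using hx.add hy
    | smul c x _ hx => simpa using hx.const_smul (σ c)
  exact hclosed.closure_subset_iff.mpr hspan (hs x)

variable [NormedAddCommGroup E] [InnerProductSpace 𝕜 E]

theorem tendsto_inner_apply_of_dense_span {U : ι → E →L[𝕜] E} {P : E →L[𝕜] E} {C : ℝ}
    (hU : ∀ i, ‖U i‖ ≤ C) {s : Set E} (hs : Dense (span 𝕜 s : Set E))
    (h : ∀ x ∈ s, ∀ y ∈ s, Tendsto (fun i ↦ ⟪x, U i y⟫_𝕜) l (𝓝 ⟪x, P y⟫_𝕜)) (x y : E) :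
    Tendsto (fun i ↦ ⟪x, U i y⟫_𝕜) l (𝓝 ⟪x, P y⟫_𝕜) := by
  have hbound : ∀ i x y, ‖⟪x, U i y⟫_𝕜‖ ≤ ‖x‖ * (C * ‖y‖) := fun i x y ↦
    (norm_inner_le_norm x _).trans <| by gcongr; exact (U i).le_of_opNorm_le (hU i) y
  have hleft : ∀ y ∈ s, ∀ x, Tendsto (fun i ↦ ⟪x, U i y⟫_𝕜) l (𝓝 ⟪x, P y⟫_𝕜) := fun y hy ↦
    ContinuousLinearMap.tendsto_apply_of_dense_span (T := fun i ↦ innerSLFlip 𝕜 (U i y))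
      (T₀ := innerSLFlip 𝕜 (P y)) (fun i x ↦ (hbound i x y).trans_eq (mul_comm _ _)) hs
      (fun x hx ↦ h x hx y hy)
  exact ContinuousLinearMap.tendsto_apply_of_dense_span (T := fun i ↦ innerSL 𝕜 x ∘L U i)
    (T₀ := innerSL 𝕜 x ∘L P) (fun i y ↦ (hbound i x y).trans_eq (mul_assoc _ _ _).symm) hs
    (fun y hy ↦ hleft y hy x) y

end DenseSpan

lemma eventually_ne_succ_nsmul {M : Type*} [AddCommGroup M] [NoZeroSMulDivisors ℤ M] {b : M}
    (hb : b ≠ 0) (a : M) : ∀ᶠ n : ℕ in atTop, a ≠ (n + 1) • b := by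
  have hinj : Function.Injective fun n : ℕ ↦ ((n + 1 : ℕ) : ℤ) • b :=
    (smul_left_injective ℤ hb).comp (Nat.cast_injective.comp (add_left_injective 1))
  simp only [natCast_zsmul] at hinj
  rw [← Nat.cofinite_eq_atTop]
  exact (hinj.tendsto_cofinite.eventually (eventually_cofinite_ne a)).mono fun _ h ↦ Ne.symm h

lemma AddCircle.measurePreserving_homeomorphAddCircle {p q : ℝ} [hp : Fact (0 < p)]
    [hq : Fact (0 < q)] :
    MeasurePreserving (homeomorphAddCircle p q hp.out.ne' hq.out.ne') haarAddCircle
      haarAddCircle := by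
  set e := homeomorphAddCircle p q hp.out.ne' hq.out.ne'
  refine ⟨e.continuous.measurable, ?_⟩
  have : (Measure.map e haarAddCircle).IsAddHaarMeasure :=
    (equivAddCircle p q hp.out.ne' hq.out.ne').isAddHaarMeasure_map haarAddCircle
      e.continuous e.symm.continuous
  have := Measure.isProbabilityMeasure_map (μ := haarAddCircle) e.continuous.aemeasurable
  exact Measure.isAddHaarMeasure_eq_of_isProbabilityMeasure _ _

namespace UnitAddTorus

variable {d : Type*} [Fintype d]

/- The measure for which `mFourierBasis` is a Hilbert basis. It is not `volume`: on `AddCircle 1`,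
`volume` is `ENNReal.ofReal 1 • haarAddCircle`. -/
abbrev haar (d : Type*) [Fintype d] : Measure (UnitAddTorus d) :=
  Measure.pi fun _ ↦ AddCircle.haarAddCircle

lemma measurePreserving_nsmul {n : ℕ} (hn : n ≠ 0) :
    MeasurePreserving (fun x : UnitAddTorus d ↦ n • x) (haar d) (haar d) := by
  simpa only [natCast_zsmul] using
    Measure.measurePreserving_zsmul (haar d) (Int.natCast_ne_zero.mpr hn)

lemma mFourier_nsmul (n : ℕ) (k : d → ℤ) (x : UnitAddTorus d) :
    mFourier k (n • x) = mFourier (n • k) x := by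
  simp only [mFourier, ContinuousMap.coe_mk, Pi.smul_apply, fourier_apply, smul_assoc,
    smul_comm n]

lemma mFourierLp_zero :
    mFourierLp 2 0 = indicatorConstLp 2 (μ := haar d) .univ (measure_ne_top _ _) (1 : ℂ) := by
  refine Lp.ext ?_
  filter_upwards [coeFn_mFourierLp 2 (0 : d → ℤ),
    indicatorConstLp_coeFn (p := 2) (μ := haar d) (s := .univ) (c := (1 : ℂ))] with x h1 h2
  rw [h1, h2, mFourier_zero, ContinuousMap.one_apply, Set.indicator_of_mem (Set.mem_univ x)]

/- Indexed from `n + 1`: `x ↦ 0 • x` does not preserve the measure. -/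
def dilation (n : ℕ) : Lp ℂ 2 (haar d) →L[ℂ] Lp ℂ 2 (haar d) :=
  (Lp.compMeasurePreservingₗᵢ ℂ _ (measurePreserving_nsmul n.succ_ne_zero)).toContinuousLinearMap

lemma dilation_mFourierLp (n : ℕ) (k : d → ℤ) :
    dilation n (mFourierLp 2 k) = (mFourierLp 2 ((n + 1) • k) : Lp ℂ 2 (haar d)) := by
  have hmp := measurePreserving_nsmul (d := d) n.succ_ne_zero
  refine Lp.ext ?_
  filter_upwards [Lp.coeFn_compMeasurePreserving (mFourierLp 2 k) hmp,
    hmp.quasiMeasurePreserving.ae_eq_comp (coeFn_mFourierLp 2 k),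
    coeFn_mFourierLp 2 ((n + 1) • k)] with x h1 h2 h3
  exact h1.trans (h2.trans ((mFourier_nsmul (n + 1) k x).trans h3.symm))

lemma dilation_indicatorConstLp (n : ℕ) {s : Set (UnitAddTorus d)} (hs : MeasurableSet s)
    (c : ℂ) :
    dilation n (indicatorConstLp 2 hs (measure_ne_top _ _) c) =
      indicatorConstLp 2 (hs.preimage (measurePreserving_nsmul n.succ_ne_zero).measurable)
        (measure_ne_top _ _) c :=
  rfl

lemma tendsto_inner_dilation_mFourierLp (a b : d → ℤ) :
    Tendsto (fun n : ℕ ↦ ⟪mFourierLp 2 a, dilation n (mFourierLp 2 b)⟫_ℂ) atTop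
      (𝓝 (⟪mFourierLp 2 0, mFourierLp 2 b⟫_ℂ * ⟪mFourierLp 2 a, mFourierLp 2 0⟫_ℂ)) := by
  simp only [dilation_mFourierLp, orthonormal_iff_ite.mp orthonormal_mFourier]
  rcases eq_or_ne b 0 with rfl | hb
  · simp
  · rw [if_neg (Ne.symm hb), zero_mul]
    exact tendsto_const_nhds.congr' <|
      (eventually_ne_succ_nsmul hb a).mono fun n hn ↦ (if_neg hn).symm

theorem tendsto_inner_dilation (f g : Lp ℂ 2 (haar d)) :
    Tendsto (fun n : ℕ ↦ ⟪f, dilation n g⟫_ℂ) atTop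
      (𝓝 (⟪f, indicatorConstLp 2 .univ (measure_ne_top _ _) 1⟫_ℂ *
        ⟪indicatorConstLp 2 .univ (measure_ne_top _ _) 1, g⟫_ℂ)) := by
  rw [← mFourierLp_zero]
  set e₀ : Lp ℂ 2 (haar d) := mFourierLp 2 0
  have hdense : Dense (span ℂ (@Set.range (Lp ℂ 2 (haar d)) _ (mFourierLp 2)) :
      Set (Lp ℂ 2 (haar d))) :=
    dense_iff_topologicalClosure_eq_top.mpr (span_mFourierLp_closure_eq_top (by simp))
  have h := tendsto_inner_apply_of_dense_span (l := atTop) (U := dilation)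
    (P := (innerSL ℂ e₀).smulRight e₀) (fun n ↦ LinearIsometry.norm_toContinuousLinearMap_le _)
    hdense ?_ f g
  · simpa only [ContinuousLinearMap.smulRight_apply, innerSL_apply_apply, inner_smul_right,
      mul_comm] using h
  · rintro - ⟨a, rfl⟩ - ⟨b, rfl⟩
    simpa only [ContinuousLinearMap.smulRight_apply, innerSL_apply_apply, inner_smul_right]
      using tendsto_inner_dilation_mFourierLp a b

theorem tendsto_measureReal_inter_preimage_nsmul {A B : Set (UnitAddTorus d)}
    (hA : MeasurableSet A) (hB : MeasurableSet B) :
    Tendsto (fun n : ℕ ↦ (haar d).real (A ∩ (fun x ↦ n • x) ⁻¹' B)) atTop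
      (𝓝 ((haar d).real A * (haar d).real B)) := by
  rw [← tendsto_add_atTop_iff_nat 1]
  have h := tendsto_inner_dilation (indicatorConstLp 2 hA (measure_ne_top _ _) (1 : ℂ))
    (indicatorConstLp 2 hB (measure_ne_top _ _) 1)
  simp only [dilation_indicatorConstLp, L2.inner_indicatorConstLp_one_indicatorConstLp_one,
    Set.inter_univ, Set.univ_inter, ← RCLike.ofReal_mul] at h
  exact tendsto_ofReal_iff'.mp h

end UnitAddTorus

namespace T2

def equivUnitAddTorus : T2 ≃ᵐ UnitAddTorus (Fin 2) :=
  let e := (AddCircle.homeomorphAddCircle (2 * π) 1 (by positivity) one_ne_zero).toMeasurableEquiv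
  (e.prodCongr e).trans MeasurableEquiv.finTwoArrow.symm

lemma measurePreserving_equivUnitAddTorus :
    MeasurePreserving equivUnitAddTorus (AddCircle.haarAddCircle.prod AddCircle.haarAddCircle)
      (UnitAddTorus.haar (Fin 2)) :=
  (measurePreserving_finTwoArrow _).symm _ |>.comp
    (AddCircle.measurePreserving_homeomorphAddCircle.prod
      AddCircle.measurePreserving_homeomorphAddCircle)

lemma volume_eq_smul_haar :
    (volume : Measure T2) =
      ENNReal.ofReal (4 * π ^ 2) • AddCircle.haarAddCircle.prod AddCircle.haarAddCircle := by
  rw [Measure.volume_eq_prod, AddCircle.volume_eq_smul_haarAddCircle, Measure.prod_smul_left,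
    Measure.prod_smul_right, smul_smul, ← ENNReal.ofReal_mul (by positivity)]
  ring_nf

lemma measureReal_eq (s : Set T2) :
    volume.real s = 4 * π ^ 2 * (UnitAddTorus.haar (Fin 2)).real (equivUnitAddTorus '' s) := by
  nth_rw 1 [← equivUnitAddTorus.preimage_image s]
  rw [volume_eq_smul_haar, measureReal_ennreal_smul_apply, ENNReal.toReal_ofReal (by positivity),
    measureReal_def, measureReal_def, measurePreserving_equivUnitAddTorus.measure_preimage_equiv]

lemma equivUnitAddTorus_dil (n : ℕ) (p : T2) :
    equivUnitAddTorus (dil n p) = n • equivUnitAddTorus p := by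
  ext i
  fin_cases i
  exacts [map_nsmul (AddCircle.equivAddCircle _ _ _ _) n p.1,
    map_nsmul (AddCircle.equivAddCircle _ _ _ _) n p.2]

lemma image_inter_preimage_dil (A B : Set T2) (n : ℕ) :
    equivUnitAddTorus '' (A ∩ dil n ⁻¹' B) =
      equivUnitAddTorus '' A ∩ (fun x ↦ n • x) ⁻¹' (equivUnitAddTorus '' B) := by
  ext x
  obtain ⟨p, rfl⟩ := equivUnitAddTorus.surjective x
  simp [← equivUnitAddTorus_dil]

end T2

/-- `|A ∩ B(n)| → |A|·|B|/(4π²)` as `n → ∞`. -/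
theorem stmt1 (A B : Set T2) (hA : MeasurableSet A) (hB : MeasurableSet B) :
    Tendsto (fun n : ℕ => (volume (A ∩ dil n ⁻¹' B)).toReal) atTop
      (nhds ((volume A).toReal * (volume B).toReal / (4 * π ^ 2))) := by
  have hmeas {s : Set T2} (hs : MeasurableSet s) : MeasurableSet (T2.equivUnitAddTorus '' s) :=
    T2.equivUnitAddTorus.measurableSet_image.mpr hs
  have h := (UnitAddTorus.tendsto_measureReal_inter_preimage_nsmul (hmeas hA) (hmeas hB)).const_mul
    (4 * π ^ 2)
  simp only [← T2.image_inter_preimage_dil, ← T2.measureReal_eq] at h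
  convert h using 2
  · rfl
  rw [← measureReal_def, ← measureReal_def, T2.measureReal_eq A, T2.measureReal_eq B]
  field_simp
end
end

section
/- Let 0 < α < 1 and let E_k ⊆ T², k = 1,2,…, be measurable sets with |E_k| > 4π²α for all k. Then there exists a strictly increasing sequence of positive integers n₁ < n₂ < ⋯ such that the limsup set ⋂_{l≥1} ⋃_{k≥l} E_k(n_k) has full measure 4π² in T². -/
open MeasureTheory Real Filter
open scoped Pointwise

noncomputable section

namespace Stmt4Aux

open scoped Pointwise

local notation "𝕋" => AddCircle (2 * π)

/-- The sequence of dilation factors. -/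
def nn (k : ℕ) : ℕ := (k + 1).factorial

lemma nn_pos (k : ℕ) : 0 < nn k := Nat.factorial_pos _

lemma nn_mono : StrictMono nn := fun a b h =>
  (Nat.factorial_lt (Nat.succ_pos a)).2 (Nat.succ_lt_succ h)

lemma nn_dvd {l k : ℕ} (h : l ≤ k) : nn l ∣ nn k :=
  Nat.factorial_dvd_factorial (Nat.succ_le_succ h)

lemma measurePreserving_smul (n : ℕ) (hn : 0 < n) :
    MeasurePreserving (fun x : 𝕋 => n • x) volume volume := by
  have h : MeasurePreserving (fun x : 𝕋 => (n : ℤ) • x) volume volume :=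
    MeasureTheory.Measure.measurePreserving_zsmul volume (by exact_mod_cast hn.ne')
  simpa [natCast_zsmul] using h

lemma measurePreserving_dil (n : ℕ) (hn : 0 < n) :
    MeasurePreserving (dil n) (volume : Measure T2) volume := by
  have h := (measurePreserving_smul n hn).prod (measurePreserving_smul n hn)
  rw [← Measure.volume_eq_prod] at h
  exact h

lemma measurable_dil (n : ℕ) (hn : 0 < n) : Measurable (dil n) :=
  (measurePreserving_dil n hn).measurable

/-- Translation by an `nn k`-torsion element preserves `dil (nn k) ⁻¹' A`. -/
lemma dil_preimage_translate {k : ℕ} {h : T2} (hh : nn k • h = 0) (A : Set T2) :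
    (fun x => h + x) ⁻¹' (dil (nn k) ⁻¹' A) = dil (nn k) ⁻¹' A := by
  have key : ∀ x : T2, dil (nn k) (h + x) = dil (nn k) x := by
    intro x
    have h1 : nn k • h.1 = 0 := congrArg Prod.fst hh
    have h2 : nn k • h.2 = 0 := congrArg Prod.snd hh
    simp [dil, Prod.fst_add, Prod.snd_add, nsmul_add, h1, h2]
  ext x
  simp [Set.mem_preimage, key x]


/-- If a set is preserved by translation as a preimage, it is preserved as a `vadd` set. -/
lemma vadd_set_eq_self {M : Type*} [AddCommGroup M] {s : Set M} {v : M}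
    (h : (fun x => v + x) ⁻¹' s = s) : (v +ᵥ s : Set M) = s := by
  have hsurj : Function.Surjective (fun x : M => v + x) := fun y =>
    ⟨-v + y, by simp⟩
  have himg : (fun x : M => v + x) '' s = s := by
    conv_lhs => rw [← h]
    exact Set.image_preimage_eq s hsurj
  rw [← Set.image_vadd]
  simpa only [vadd_eq_add] using himg

end Stmt4Aux

open Stmt4Aux

set_option maxHeartbeats 1000000 in
/-- For sets `E_k ⊆ T²` with `|E_k| > 4π²α` there exists a strictly increasing
sequence `n_k` of positive integers such that the limsup set
`⋂_{l≥1} ⋃_{k≥l} E_k(n_k)` has full measure `4π²`. -/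
theorem stmt4 (α : ℝ) (hα0 : 0 < α) (hα1 : α < 1)
    (E : ℕ → Set T2) (hE : ∀ k, MeasurableSet (E k))
    (hmeas : ∀ k, (volume (E k)).toReal > 4 * π ^ 2 * α) :
    ∃ n : ℕ → ℕ, StrictMono n ∧ 0 < n 0 ∧
      volume (⋂ l, ⋃ k, ⋃ (_ : l ≤ k), dil (n k) ⁻¹' E k)
        = ENNReal.ofReal (4 * π ^ 2) := by
  classical
  have hπ : (0:ℝ) < 2 * π := by positivity
  refine ⟨nn, nn_mono, nn_pos 0, ?_⟩
  set tail : ℕ → Set T2 := fun m => ⋃ k, ⋃ (_ : m ≤ k), dil (nn k) ⁻¹' E k with htail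
  set S : Set T2 := ⋂ l, tail l with hSdef
  have hEk : ∀ k, MeasurableSet (dil (nn k) ⁻¹' E k) := fun k =>
    (hE k).preimage (measurable_dil _ (nn_pos k))
  have htail_meas : ∀ m, MeasurableSet (tail m) := fun m =>
    MeasurableSet.iUnion fun k => MeasurableSet.iUnion fun _ => hEk k
  have hSmeas : MeasurableSet S := MeasurableSet.iInter fun l => htail_meas l
  have htail_anti : Antitone tail := by
    intro a b hab
    exact Set.iUnion₂_mono' fun k hk => ⟨k, hab.trans hk, subset_rfl⟩
  have hkill : ∀ {l k : ℕ}, l ≤ k → ∀ h : T2, nn l • h = 0 → nn k • h = 0 := by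
    intro l k hlk h hh
    obtain ⟨c, hc⟩ := nn_dvd hlk
    have h1 : nn k • h = (c * nn l) • h := by
      rw [hc]
      exact congrArg (fun m : ℕ => m • h) (Nat.mul_comm (nn l) c)
    rw [h1, mul_smul, hh, smul_zero]
  have htail_inv : ∀ {l m : ℕ}, l ≤ m → ∀ h : T2, nn l • h = 0 →
      (fun x => h + x) ⁻¹' tail m = tail m := by
    intro l m hlm h hh
    simp only [htail, Set.preimage_iUnion]
    exact Set.iUnion_congr fun k => Set.iUnion_congr fun hk =>
      dil_preimage_translate (hkill (hlm.trans hk) h hh) (E k)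
  have hS_shift : ∀ l, S = ⋂ j, tail (l + j) := by
    intro l
    apply Set.Subset.antisymm
    · exact Set.subset_iInter fun j => Set.iInter_subset _ (l + j)
    · refine Set.subset_iInter fun m => ?_
      exact (Set.iInter_subset (fun j => tail (l + j)) m).trans
        (htail_anti (Nat.le_add_left m l))
  have hS_inv : ∀ (l : ℕ) (h : T2), nn l • h = 0 → (fun x => h + x) ⁻¹' S = S := by
    intro l h hh
    have key : (fun x => h + x) ⁻¹' (⋂ j, tail (l + j)) = ⋂ j, tail (l + j) := by
      rw [Set.preimage_iInter]
      exact Set.iInter_congr fun j => htail_inv (Nat.le_add_right l j) h hh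
    rw [hS_shift l, key]
  -- finiteness of the volume on T2
  haveI hfin : IsFiniteMeasure (volume : Measure T2) := by
    constructor
    rw [Measure.volume_eq_prod, ← Set.univ_prod_univ, Measure.prod_prod,
      AddCircle.measure_univ]
    exact ENNReal.mul_lt_top ENNReal.ofReal_lt_top ENNReal.ofReal_lt_top
  -- positive measure of S
  have hSpos : volume S ≠ 0 := by
    have h1 : ∀ m, ENNReal.ofReal (4 * π ^ 2 * α) ≤ volume (tail m) := by
      intro m
      have h2 : dil (nn m) ⁻¹' E m ⊆ tail m := by
        simp only [htail]
        exact Set.subset_iUnion₂ (s := fun k (_ : m ≤ k) => dil (nn k) ⁻¹' E k) m le_rfl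
      have h3 : volume (dil (nn m) ⁻¹' E m) = volume (E m) :=
        (measurePreserving_dil _ (nn_pos m)).measure_preimage (hE m).nullMeasurableSet
      calc ENNReal.ofReal (4 * π ^ 2 * α) ≤ volume (E m) := by
            have hne : volume (E m) ≠ ⊤ := measure_ne_top _ _
            rw [← ENNReal.ofReal_toReal hne]
            exact ENNReal.ofReal_le_ofReal (hmeas m).le
        _ = volume (dil (nn m) ⁻¹' E m) := h3.symm
        _ ≤ volume (tail m) := measure_mono h2
    have h4 : volume S = ⨅ m, volume (tail m) :=
      htail_anti.measure_iInter (fun i => (htail_meas i).nullMeasurableSet)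
        ⟨0, measure_ne_top _ _⟩
    have h5 : ENNReal.ofReal (4 * π ^ 2 * α) ≤ volume S := h4 ▸ le_iInf h1
    have hpos : (0 : ENNReal) < ENNReal.ofReal (4 * π ^ 2 * α) :=
      ENNReal.ofReal_pos.2 (by positivity)
    exact (hpos.trans_le h5).ne'
  -- torsion elements
  set u : ℕ → AddCircle (2 * π) := fun j => (((2 * π) / (nn j) : ℝ) : AddCircle (2 * π))
    with hu
  have hord : ∀ j, addOrderOf (u j) = nn j := fun j =>
    AddCircle.addOrderOf_period_div (nn_pos j)
  have htop : Tendsto (addOrderOf ∘ u) atTop atTop := by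
    have : (addOrderOf ∘ u) = nn := funext hord
    rw [this]
    exact nn_mono.tendsto_atTop
  have hu0 : ∀ j, nn j • u j = 0 := by
    intro j
    have hcast : ((nn j : ℝ)) ≠ 0 := Nat.cast_ne_zero.2 (nn_pos j).ne'
    have h1 : (nn j : ℕ) • ((2 * π) / (nn j) : ℝ) = 2 * π := by
      rw [nsmul_eq_mul]
      field_simp
    calc nn j • u j = ((nn j • ((2 * π) / (nn j) : ℝ) : ℝ) : AddCircle (2 * π)) :=
          (AddCircle.coe_nsmul _).symm
      _ = (((2 * π : ℝ)) : AddCircle (2 * π)) := by rw [h1]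
      _ = 0 := AddCircle.coe_period (2 * π)
  -- torsion of negatives
  have hun : ∀ j, nn j • (-(u j)) = 0 := by
    intro j
    rw [smul_neg, hu0 j, neg_zero]
  -- slice function
  set f : AddCircle (2 * π) → ENNReal := fun x => volume (Prod.mk x ⁻¹' S) with hf
  have hfmeas : Measurable f := measurable_measure_prodMk_left hSmeas
  have hvol : volume S = ∫⁻ x, f x ∂volume := by
    rw [Measure.volume_eq_prod, Measure.prod_apply hSmeas]
  -- per-slice dichotomy
  have hco : ∀ x : AddCircle (2 * π), f x = 0 ∨ f x = ENNReal.ofReal (2 * π) := by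
    intro x
    have hsm : MeasurableSet (Prod.mk x ⁻¹' S) := measurable_prodMk_left hSmeas
    have hslice_inv : ∀ (j : ℕ) (v : AddCircle (2 * π)), nn j • v = 0 →
        (fun y => v + y) ⁻¹' (Prod.mk x ⁻¹' S) = Prod.mk x ⁻¹' S := by
      intro j v hv
      have hv2 : nn j • (((0 : AddCircle (2 * π)), v) : T2) = 0 := by
        rw [Prod.smul_mk, hv, smul_zero]
        rfl
      have hSv := hS_inv j ((0 : AddCircle (2 * π)), v) hv2
      ext y
      simp only [Set.mem_preimage]
      have hpt : ((0 : AddCircle (2 * π)), v) + (x, y) = (x, v + y) := by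
        simp [Prod.mk_add_mk]
      rw [← hpt]
      exact Set.ext_iff.mp hSv (x, y)
    have hvadd : ∀ j, (u j +ᵥ (Prod.mk x ⁻¹' S) : Set (AddCircle (2 * π)))
        =ᵐ[volume] (Prod.mk x ⁻¹' S) :=
      fun j => Filter.EventuallyEq.of_eq
        (vadd_set_eq_self (hslice_inv j (u j) (hu0 j)))
    obtain h | h := AddCircle.ae_empty_or_univ_of_forall_vadd_ae_eq_self
      hsm.nullMeasurableSet hvadd htop
    · exact Or.inl (ae_eq_empty.mp h)
    · refine Or.inr ?_
      show volume (Prod.mk x ⁻¹' S) = ENNReal.ofReal (2 * π)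
      rw [measure_congr h, AddCircle.measure_univ]
  -- the exceptional set A
  set A : Set (AddCircle (2 * π)) := f ⁻¹' {0} with hA
  have hAmeas : MeasurableSet A := hfmeas (measurableSet_singleton 0)
  have hfshift : ∀ (j : ℕ) (v : AddCircle (2 * π)), nn j • v = 0 →
      ∀ x, f (v + x) = f x := by
    intro j v hv x
    have hv2 : nn j • ((v, (0 : AddCircle (2 * π))) : T2) = 0 := by
      rw [Prod.smul_mk, hv, smul_zero]
      rfl
    have hSv := hS_inv j (v, (0 : AddCircle (2 * π))) hv2
    have hset : Prod.mk (v + x) ⁻¹' S = Prod.mk x ⁻¹' S := by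
      ext y
      simp only [Set.mem_preimage]
      have hpt : ((v, (0 : AddCircle (2 * π))) : T2) + (x, y) = (v + x, y) := by
        simp [Prod.mk_add_mk]
      rw [← hpt]
      exact Set.ext_iff.mp hSv (x, y)
    simp only [hf, hset]
  have hAinv : ∀ j, (u j +ᵥ A : Set (AddCircle (2 * π))) =ᵐ[volume] A := by
    intro j
    refine Filter.EventuallyEq.of_eq (vadd_set_eq_self ?_)
    ext x
    simp only [Set.mem_preimage, hA, Set.mem_singleton_iff, hfshift j (u j) (hu0 j) x]
  obtain hA0 | hA1 := AddCircle.ae_empty_or_univ_of_forall_vadd_ae_eq_self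
    hAmeas.nullMeasurableSet hAinv htop
  · -- A is null, so a.e. slice is full
    have hAnull : volume A = 0 := ae_eq_empty.mp hA0
    have hae : ∀ᵐ x ∂(volume : Measure (AddCircle (2 * π))), x ∈ Aᶜ :=
      MeasureTheory.mem_ae_iff.mpr (by
        show volume (Aᶜᶜ) = 0
        rwa [compl_compl])
    have hfae : f =ᵐ[volume] fun _ => ENNReal.ofReal (2 * π) := by
      refine hae.mono fun x hx => ?_
      rcases hco x with h | h
      · exact absurd h hx
      · exact h
    rw [hvol, lintegral_congr_ae hfae, lintegral_const, AddCircle.measure_univ,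
      ← ENNReal.ofReal_mul hπ.le]
    congr 1
    ring
  · -- A is full, so a.e. slice is null: contradiction with positivity
    exfalso
    apply hSpos
    have hae : ∀ᵐ x ∂(volume : Measure (AddCircle (2 * π))), x ∈ A :=
      MeasureTheory.mem_ae_iff.mpr (ae_eq_univ.mp hA1)
    have hfae : f =ᵐ[volume] (fun _ => (0 : ENNReal)) := hae.mono fun x hx => hx
    rw [hvol, lintegral_congr_ae hfae, lintegral_zero]
end
end
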